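/- arXiv:2310.01665 — 3 statements merged into one kernel-verified Lean document; each statement's English description precedes it below -/
import Mathlib

section
/- Let k > 0 be a real number and n an integer. Suppose f : (0,∞) → ℂ is twice differentiable and satisfies the Bessel equation of order n, namely w²·f''(w) + w·f'(w) + (w² − n²)·f(w) = 0 for all w > 0. Define u : ℂ ∖ {0} → ℂ by u(z) = f(k·|z|)·(z/|z|)ⁿ. Then u satisfies the homogeneous Helmholtz equation Δu + k²·u = 0 at every z ≠ 0. -/
/-- The Laplacian of `u : ℂ → ℂ`, identifying `ℂ` with `ℝ²` via `z = x + iy`: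
the sum of the second partial derivatives in the real directions `1` and `I`. -/
noncomputable def planeLaplacian (u : ℂ → ℂ) (z : ℂ) : ℂ :=
  fderiv ℝ (fun w => fderiv ℝ u w 1) z 1 +
  fderiv ℝ (fun w => fderiv ℝ u w Complex.I) z Complex.I


noncomputable def dabs (z : ℂ) : ℂ →L[ℝ] ℝ :=
  ((‖z‖)⁻¹ * z.re) • Complex.reCLM + ((‖z‖)⁻¹ * z.im) • Complex.imCLM

theorem habs {z : ℂ} (hz : z ≠ 0) : HasFDerivAt (fun w : ℂ => ‖w‖) (dabs z) z := by
  have h0 : 0 < ‖z‖ := by simpa [norm_pos_iff] using hz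
  have hsq : HasFDerivAt (fun w : ℂ => w.re * w.re + w.im * w.im)
      ((z.re • Complex.reCLM + z.re • Complex.reCLM) +
        (z.im • Complex.imCLM + z.im • Complex.imCLM)) z :=
    ((Complex.reCLM.hasFDerivAt.mul Complex.reCLM.hasFDerivAt).add
      (Complex.imCLM.hasFDerivAt.mul Complex.imCLM.hasFDerivAt))
  have hpos : z.re * z.re + z.im * z.im ≠ 0 := by
    have := Complex.normSq_pos.2 hz
    simpa [Complex.normSq_apply] using this.ne'
  have hsqrt := (Real.hasDerivAt_sqrt hpos).comp_hasFDerivAt z hsq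
  have habs2 : (fun w : ℂ => ‖w‖) = fun w : ℂ => Real.sqrt (w.re * w.re + w.im * w.im) := by
    funext w; rw [Complex.norm_def, Complex.normSq_apply]
  rw [habs2]
  refine hsqrt.congr_fderiv ?_
  have hs : Real.sqrt (z.re * z.re + z.im * z.im) = ‖z‖ := by
    rw [Complex.norm_def, Complex.normSq_apply]
  ext v
  simp only [dabs, hs, ContinuousLinearMap.add_apply, ContinuousLinearMap.smul_apply,
    smul_eq_mul, Complex.reCLM_apply, Complex.imCLM_apply,
    ContinuousLinearMap.coe_smul', Pi.smul_apply]
  field_simp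
  ring

theorem hzpowR (m : ℤ) {s : ℝ} (hs : s ≠ 0) :
    HasDerivAt (fun t : ℝ => (t : ℂ) ^ m) ((m : ℂ) * (s : ℂ) ^ (m - 1)) s :=
  (hasDerivAt_zpow m (s : ℂ) (Or.inl (by exact_mod_cast hs))).comp_ofReal

theorem hzpowC (m : ℤ) {z : ℂ} (hz : z ≠ 0) :
    HasFDerivAt (fun w : ℂ => w ^ m)
      (((m : ℂ) * z ^ (m - 1)) • (ContinuousLinearMap.id ℝ ℂ)) z := by
  have := ((hasDerivAt_zpow m z (Or.inl hz)).hasFDerivAt).restrictScalars ℝ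
  refine this.congr_fderiv ?_
  ext v
  simp [mul_comm]

theorem hcompabs (G G₁ : ℝ → ℂ) (hG : ∀ s : ℝ, 0 < s → HasDerivAt G (G₁ s) s)
    {z : ℂ} (hz : z ≠ 0) :
    HasFDerivAt (fun w => G (‖w‖))
      ((G₁ (‖z‖)) • ((dabs z).smulRight 1)) z := by
  have h0 : 0 < ‖z‖ := by simpa [norm_pos_iff] using hz
  have := ((hG (‖z‖) h0).hasFDerivAt).comp z (habs hz)
  refine this.congr_fderiv ?_
  ext v
  simp [ContinuousLinearMap.smulRight_apply, smul_eq_mul, mul_comm]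

theorem step1 (G G₁ : ℝ → ℂ) (hG : ∀ s : ℝ, 0 < s → HasDerivAt G (G₁ s) s)
    (m : ℤ) {z : ℂ} (hz : z ≠ 0) :
    HasFDerivAt (fun w => G (‖w‖) * w ^ m)
      ((G₁ (‖z‖) * z ^ m) • (Complex.ofRealCLM.comp (dabs z)) +
        ((m : ℂ) * G (‖z‖) * z ^ (m - 1)) • (ContinuousLinearMap.id ℝ ℂ)) z := by
  have := (hcompabs G G₁ hG hz).mul (hzpowC m hz)
  refine this.congr_fderiv ?_
  ext v
  simp [ContinuousLinearMap.smulRight_apply, smul_eq_mul]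
  ring

theorem step2 (G G₁ H H₁ : ℝ → ℂ) (hG : ∀ s : ℝ, 0 < s → HasDerivAt G (G₁ s) s)
    (hH : ∀ s : ℝ, 0 < s → HasDerivAt H (H₁ s) s) (n : ℤ) (e : ℂ) {z : ℂ} (hz : z ≠ 0) :
    ∃ M : ℂ →L[ℝ] ℂ,
      HasFDerivAt (fun w => (((‖w‖)⁻¹ * (w.re * e.re + w.im * e.im) : ℝ) : ℂ) *
          (H (‖w‖) * w ^ n) + (n : ℂ) * (G (‖w‖) * w ^ (n - 1)) * e) M z ∧
      M e =
        (((‖z‖)⁻¹ * ((e.re ^ 2 + e.im ^ 2) -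
            ((‖z‖)⁻¹ * (z.re * e.re + z.im * e.im)) ^ 2) : ℝ) : ℂ) *
            (H (‖z‖) * z ^ n) +
        (((‖z‖)⁻¹ * (z.re * e.re + z.im * e.im) : ℝ) : ℂ) *
            (H₁ (‖z‖) * (((‖z‖)⁻¹ * (z.re * e.re + z.im * e.im) : ℝ) : ℂ) *
              z ^ n + H (‖z‖) * (n : ℂ) * z ^ (n - 1) * e) +
        (n : ℂ) * (G₁ (‖z‖) *
            (((‖z‖)⁻¹ * (z.re * e.re + z.im * e.im) : ℝ) : ℂ) * z ^ (n - 1) +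
          G (‖z‖) * ((n : ℂ) - 1) * z ^ (n - 2) * e) * e := by
  have h0 : 0 < ‖z‖ := by simpa [norm_pos_iff] using hz
  have hb : HasFDerivAt (fun w : ℂ => w.re * e.re + w.im * e.im)
      (e.re • Complex.reCLM + e.im • Complex.imCLM) z := by
    exact (Complex.reCLM.hasFDerivAt (x := z)).mul_const e.re |>.add
      ((Complex.imCLM.hasFDerivAt (x := z)).mul_const e.im)
  have hinv : HasFDerivAt (fun w : ℂ => (‖w‖)⁻¹)
      ((-((‖z‖) ^ 2)⁻¹ : ℝ) • dabs z) z :=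
    (hasDerivAt_inv h0.ne').comp_hasFDerivAt z (habs hz)
  have hcr := hinv.mul hb
  have hc := Complex.ofRealCLM.hasFDerivAt.comp z hcr
  have hc' : HasFDerivAt
      (fun w : ℂ => (((‖w‖)⁻¹ * (w.re * e.re + w.im * e.im) : ℝ) : ℂ))
      (Complex.ofRealCLM.comp
        (((‖z‖)⁻¹ : ℝ) • (e.re • Complex.reCLM + e.im • Complex.imCLM) +
          (z.re * e.re + z.im * e.im) • ((-((‖z‖) ^ 2)⁻¹ : ℝ) • dabs z))) z := hc
  have hterm1 := hc'.mul (step1 H H₁ hH n hz)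
  have hterm2 := ((step1 G G₁ hG (n - 1) hz).const_mul ((n : ℂ))).mul_const e
  refine ⟨_, hterm1.add hterm2, ?_⟩
  simp only [ContinuousLinearMap.add_apply, ContinuousLinearMap.smul_apply,
    ContinuousLinearMap.comp_apply, ContinuousLinearMap.coe_smul', Pi.smul_apply,
    ContinuousLinearMap.neg_apply, ContinuousLinearMap.id_apply,
    Complex.ofRealCLM_apply, Complex.reCLM_apply, Complex.imCLM_apply, dabs,
    smul_eq_mul, Complex.real_smul]
  push_cast
  ring_nf

section
variable (k : ℝ) (n : ℤ) (f f' f'' : ℝ → ℂ)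

noncomputable def gg (s : ℝ) : ℂ := f (k * s) * (s : ℂ) ^ (-n)
noncomputable def gg₁ (s : ℝ) : ℂ :=
  (k : ℂ) * f' (k * s) * (s : ℂ) ^ (-n) + f (k * s) * (-n : ℂ) * (s : ℂ) ^ (-n - 1)
noncomputable def gg₂ (s : ℝ) : ℂ :=
  (k : ℂ) ^ 2 * f'' (k * s) * (s : ℂ) ^ (-n)
    + 2 * (k : ℂ) * (-n : ℂ) * f' (k * s) * (s : ℂ) ^ (-n - 1)
    + (-n : ℂ) * (-n - 1 : ℂ) * f (k * s) * (s : ℂ) ^ (-n - 2)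

theorem hfk (hk : 0 < k) (hf : ∀ w : ℝ, 0 < w → HasDerivAt f (f' w) w) {s : ℝ} (hs : 0 < s) :
    HasDerivAt (fun t : ℝ => f (k * t)) ((k : ℂ) * f' (k * s)) s := by
  have := (hf (k * s) (by positivity)).scomp s ((hasDerivAt_id s).const_mul k)
  refine this.congr_deriv ?_
  simp [smul_eq_mul, mul_comm]

theorem hgderiv (hk : 0 < k) (hf : ∀ w : ℝ, 0 < w → HasDerivAt f (f' w) w) {s : ℝ}
    (hs : 0 < s) : HasDerivAt (gg k n f) (gg₁ k n f f' s) s := by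
  have h1 := (hfk k f f' hk hf hs).mul (hzpowR (-n) hs.ne')
  unfold gg gg₁
  refine h1.congr_deriv ?_
  push_cast
  ring

theorem hgderiv₁ (hk : 0 < k) (hf : ∀ w : ℝ, 0 < w → HasDerivAt f (f' w) w)
    (hf' : ∀ w : ℝ, 0 < w → HasDerivAt f' (f'' w) w) {s : ℝ} (hs : 0 < s) :
    HasDerivAt (gg₁ k n f f') (gg₂ k n f f' f'' s) s := by
  have h1 := ((hasDerivAt_const s (k : ℂ)).mul (hfk k f' f'' hk hf' hs)).mul (hzpowR (-n) hs.ne')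
  have h2 := ((hfk k f f' hk hf hs).mul (hasDerivAt_const s (-n : ℂ))).mul
    (hzpowR (-n - 1) hs.ne')
  have h3 := h1.add h2
  unfold gg₁ gg₂
  refine h3.congr_deriv ?_
  simp only [Pi.mul_apply]
  have e1 : (s : ℂ) ^ (-n - 1 - 1) = (s : ℂ) ^ (-n - 2) := by ring_nf
  rw [e1]
  push_cast
  ring
end

theorem keyalg (nc k x y r A B C R Z zi ri : ℂ)
    (hx2 : x ^ 2 + y ^ 2 = r ^ 2) (hzz : zi * (x + y * Complex.I) = 1) (hri : ri * r = 1)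
    (hB : (k * r) ^ 2 * C + (k * r) * B + ((k * r) ^ 2 - nc ^ 2) * A = 0) :
    (ri * (1 - (ri * x) ^ 2)) *
        ((k * B * R - nc * A * R * ri) * Z) +
      (ri * x) *
        ((k ^ 2 * C * R - 2 * k * nc * B * R * ri + nc * (nc + 1) * A * R * ri * ri) *
            (ri * x) * Z +
          (k * B * R - nc * A * R * ri) * nc * (Z * zi) * 1) +
      nc *
        ((k * B * R - nc * A * R * ri) * (ri * x) * (Z * zi) +
          (A * R) * (nc - 1) * (Z * zi * zi) * 1) * 1 +
      ((ri * (1 - (ri * y) ^ 2)) *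
        ((k * B * R - nc * A * R * ri) * Z) +
      (ri * y) *
        ((k ^ 2 * C * R - 2 * k * nc * B * R * ri + nc * (nc + 1) * A * R * ri * ri) *
            (ri * y) * Z +
          (k * B * R - nc * A * R * ri) * nc * (Z * zi) * Complex.I) +
      nc *
        ((k * B * R - nc * A * R * ri) * (ri * y) * (Z * zi) +
          (A * R) * (nc - 1) * (Z * zi * zi) * Complex.I) * Complex.I) +
      k ^ 2 * (A * R * Z) = 0 := by
  have hI : (Complex.I : ℂ) ^ 2 = -1 := Complex.I_sq
  linear_combination
    (((k ^ 2 * C * R - 2 * k * nc * B * R * ri + nc * (nc + 1) * A * R * ri * ri) * Z * ri ^ 2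
        - (k * B * R - nc * A * R * ri) * Z * ri ^ 3)) * hx2
    + (nc * (nc - 1) * (A * R) * Z * zi ^ 2) * hI
    + (ri ^ 2 * Z * R) * hB
    + (2 * nc * (k * B * R - nc * A * R * ri) * Z * ri) * hzz
    + ((((k ^ 2 * C * R - 2 * k * nc * B * R * ri + nc * (nc + 1) * A * R * ri * ri) * Z
        - (k * B * R - nc * A * R * ri) * Z * ri
        - Z * R * (k ^ 2 * C + k ^ 2 * A)) * (ri * r + 1) - Z * R * k * ri * B)) * hri

/-- If `f` is twice differentiable on `(0, ∞)` and satisfies the Bessel equation of order `n`,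
then `u(z) = f(k|z|) · (z/|z|)ⁿ` satisfies the Helmholtz equation `Δu + k²u = 0` at every
`z ≠ 0`. -/
theorem bessel_solution_satisfies_helmholtz
    (k : ℝ) (hk : 0 < k) (n : ℤ) (f f' f'' : ℝ → ℂ)
    (hf : ∀ w : ℝ, 0 < w → HasDerivAt f (f' w) w)
    (hf' : ∀ w : ℝ, 0 < w → HasDerivAt f' (f'' w) w)
    (hbessel : ∀ w : ℝ, 0 < w →
      (w : ℂ) ^ 2 * f'' w + (w : ℂ) * f' w + ((w : ℂ) ^ 2 - (n : ℂ) ^ 2) * f w = 0)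
    (u : ℂ → ℂ)
    (hu : ∀ z : ℂ, u z = f (k * ‖z‖) * (z / (‖z‖ : ℂ)) ^ n) :
    ∀ z : ℂ, z ≠ 0 → planeLaplacian u z + (k : ℂ) ^ 2 * u z = 0 := by
  intro z hz
  have h0 : 0 < ‖z‖ := by simpa [norm_pos_iff] using hz
  have hgd : ∀ s : ℝ, 0 < s → HasDerivAt (gg k n f) (gg₁ k n f f' s) s :=
    fun s hs => hgderiv k n f f' hk hf hs
  have hgd1 : ∀ s : ℝ, 0 < s → HasDerivAt (gg₁ k n f f') (gg₂ k n f f' f'' s) s :=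
    fun s hs => hgderiv₁ k n f f' f'' hk hf hf' hs
  have hkey : ∀ w : ℂ, w ≠ 0 → u w = gg k n f (‖w‖) * w ^ n := by
    intro w hw
    have h0w : ((‖w‖ : ℝ) : ℂ) ≠ 0 := by
      have := (norm_pos_iff.2 hw).ne'
      exact_mod_cast this
    rw [hu w]
    unfold gg
    rw [div_zpow, zpow_neg, div_eq_mul_inv]
    ring
  have hUw : ∀ w : ℂ, w ≠ 0 → HasFDerivAt u
      ((gg₁ k n f f' (‖w‖) * w ^ n) • (Complex.ofRealCLM.comp (dabs w)) +
        ((n : ℂ) * gg k n f (‖w‖) * w ^ (n - 1)) •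
          (ContinuousLinearMap.id ℝ ℂ)) w := by
    intro w hw
    refine (step1 _ _ hgd n hw).congr_of_eventuallyEq ?_
    filter_upwards [eventually_ne_nhds hw] with v hv
    exact hkey v hv
  have hder : ∀ e : ℂ, (fun w => fderiv ℝ u w e) =ᶠ[nhds z]
      (fun w => (((‖w‖)⁻¹ * (w.re * e.re + w.im * e.im) : ℝ) : ℂ) *
          (gg₁ k n f f' (‖w‖) * w ^ n) +
        (n : ℂ) * (gg k n f (‖w‖) * w ^ (n - 1)) * e) := by
    intro e
    filter_upwards [eventually_ne_nhds hz] with w hw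
    rw [(hUw w hw).fderiv]
    simp only [ContinuousLinearMap.add_apply, ContinuousLinearMap.smul_apply,
      ContinuousLinearMap.comp_apply, ContinuousLinearMap.id_apply, dabs,
      Complex.ofRealCLM_apply, Complex.reCLM_apply, Complex.imCLM_apply,
      ContinuousLinearMap.coe_smul', Pi.smul_apply, smul_eq_mul, Complex.real_smul]
    push_cast
    ring
  obtain ⟨M1, hM1, hM1e⟩ := step2 (gg k n f) (gg₁ k n f f') (gg₁ k n f f')
    (gg₂ k n f f' f'') hgd hgd1 n 1 hz
  obtain ⟨M2, hM2, hM2e⟩ := step2 (gg k n f) (gg₁ k n f f') (gg₁ k n f f')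
    (gg₂ k n f f' f'') hgd hgd1 n Complex.I hz
  have e1 : fderiv ℝ (fun w => fderiv ℝ u w 1) z 1 = M1 1 := by
    rw [(hder 1).fderiv_eq, hM1.fderiv]
  have e2 : fderiv ℝ (fun w => fderiv ℝ u w Complex.I) z Complex.I = M2 Complex.I := by
    rw [(hder Complex.I).fderiv_eq, hM2.fderiv]
  unfold planeLaplacian
  rw [e1, e2, hM1e, hM2e, hkey z hz]
  have hrne : ((‖z‖ : ℝ) : ℂ) ≠ 0 := by exact_mod_cast h0.ne'
  have hzp1 : z ^ (n - 1) = z ^ n * z⁻¹ := zpow_sub_one₀ hz n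
  have hzp2 : z ^ (n - 2) = z ^ n * z⁻¹ * z⁻¹ := by
    rw [show n - 2 = n - 1 - 1 by ring, zpow_sub_one₀ hz, zpow_sub_one₀ hz]
  have hrp1 : ((‖z‖ : ℝ) : ℂ) ^ (-n - 1) =
      ((‖z‖ : ℝ) : ℂ) ^ (-n) * ((‖z‖ : ℝ) : ℂ)⁻¹ :=
    zpow_sub_one₀ hrne (-n)
  have hrp2 : ((‖z‖ : ℝ) : ℂ) ^ (-n - 2) =
      ((‖z‖ : ℝ) : ℂ) ^ (-n) * ((‖z‖ : ℝ) : ℂ)⁻¹ *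
        ((‖z‖ : ℝ) : ℂ)⁻¹ := by
    rw [show -n - 2 = -n - 1 - 1 by ring, zpow_sub_one₀ hrne, zpow_sub_one₀ hrne]
  unfold gg gg₁ gg₂
  rw [hzp1, hzp2, hrp1, hrp2]
  simp only [Complex.one_re, Complex.one_im, Complex.I_re, Complex.I_im]
  have hx2 : ((z.re : ℝ) : ℂ) ^ 2 + ((z.im : ℝ) : ℂ) ^ 2 = ((‖z‖ : ℝ) : ℂ) ^ 2 := by
    have h : (‖z‖ : ℝ) ^ 2 = z.re ^ 2 + z.im ^ 2 := by
      rw [Complex.sq_norm, Complex.normSq_apply]; ring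
    rw [← Complex.ofReal_pow, ← Complex.ofReal_pow, ← Complex.ofReal_pow, h]
    push_cast
    ring
  have hzz : (z⁻¹ : ℂ) * ((z.re : ℂ) + (z.im : ℂ) * Complex.I) = 1 := by
    rw [Complex.re_add_im]; exact inv_mul_cancel₀ hz
  have hri : ((‖z‖ : ℝ) : ℂ)⁻¹ * ((‖z‖ : ℝ) : ℂ) = 1 :=
    inv_mul_cancel₀ hrne
  have hBz := hbessel (k * ‖z‖) (by positivity)
  push_cast at hBz
  have key := keyalg (n : ℂ) (k : ℂ) (z.re : ℂ) (z.im : ℂ) ((‖z‖ : ℝ) : ℂ)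
    (f (k * ‖z‖)) (f' (k * ‖z‖)) (f'' (k * ‖z‖))
    (((‖z‖ : ℝ) : ℂ) ^ (-n)) (z ^ n) z⁻¹ ((‖z‖ : ℝ) : ℂ)⁻¹
    hx2 hzz hri hBz
  push_cast
  linear_combination key
end

section
/- Newman's theorem on rational approximation of the absolute value: there exists a constant C > 0 such that for every n ≥ 1 there is a rational function r_n of type (n, n) with real coefficients satisfying sup_{x ∈ [−1,1]} | |x| − r_n(x) | = O(e^{−C√n}) as n → ∞; that is, rational approximation to f(x) = |x| on [−1,1] achieves root-exponential convergence. -/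
/-!
Newman's construction. Put `ξ = exp (-1/√m)` and `p(x) = ∏_{k<m} (x + ξ^k)`. The even rational
function `r(x) = x (p(x) - p(-x)) / (p(x) + p(-x))` has type `(m + 1, m)`, and for `x ≥ 0`
`|x| - r(x) = 2x p(-x) / (p(x) + p(-x))`. If `x ≤ ξ^(m-1)`, every factor of `p(-x)` is
nonnegative, so the error is at most `2x ≤ 2ξ^(m-1)`. Otherwise `x` lies between two consecutive
nodes, and each of the `⌊√m⌋ + 1` nodes `ξ^k` within `⌊√m⌋` steps of it satisfies
`|ξ^k - x| ≤ exp (-ξ^(⌊√m⌋+1)) (ξ^k + x)` with `ξ^(⌊√m⌋+1) ≥ e^(-2)`; hence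
`|p(-x)| ≤ exp (-e^(-2) √m) p(x)`, and the error is `O(exp (-e^(-2) √m))`.
-/

open Polynomial Finset Real

lemma abs_sub_le_exp_neg_mul_add {a x c : ℝ} (ha : 0 < a) (hx : 0 ≤ x)
    (hca : c * x ≤ a) (hcx : c * a ≤ x) : |a - x| ≤ exp (-c) * (a + x) := by
  have hlin : |a - x| ≤ (1 - c) * (a + x) := by
    rw [abs_le]; constructor <;> nlinarith
  calc |a - x| ≤ (1 - c) * (a + x) := hlin
    _ ≤ exp (-c) * (a + x) := by
      gcongr
      linarith [add_one_le_exp (-c)]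

lemma abs_prod_sub_le_exp_mul_prod_add {ι : Type*} {s t : Finset ι} (hts : t ⊆ s) {a : ι → ℝ}
    {x c : ℝ} (ha : ∀ k ∈ s, 0 < a k) (hx : 0 ≤ x) (hca : ∀ k ∈ t, c * x ≤ a k)
    (hcx : ∀ k ∈ t, c * a k ≤ x) :
    |∏ k ∈ s, (a k - x)| ≤ exp (-(#t * c)) * ∏ k ∈ s, (a k + x) := by
  classical
  have hfar : ∏ k ∈ s \ t, |a k - x| ≤ ∏ k ∈ s \ t, (a k + x) := by
    refine prod_le_prod (fun _ _ => abs_nonneg _) fun k hk => ?_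
    have := ha k (mem_sdiff.1 hk).1
    rw [abs_le]; constructor <;> linarith
  have hnear : ∏ k ∈ t, |a k - x| ≤ ∏ k ∈ t, (exp (-c) * (a k + x)) :=
    prod_le_prod (fun _ _ => abs_nonneg _) fun k hk =>
      abs_sub_le_exp_neg_mul_add (ha k (hts hk)) hx (hca k hk) (hcx k hk)
  rw [abs_prod, ← prod_sdiff hts, ← prod_sdiff hts (f := fun k => a k + x)]
  calc (∏ k ∈ s \ t, |a k - x|) * ∏ k ∈ t, |a k - x|
      ≤ (∏ k ∈ s \ t, (a k + x)) * ∏ k ∈ t, (exp (-c) * (a k + x)) := by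
        refine mul_le_mul hfar hnear (prod_nonneg fun _ _ => abs_nonneg _) ?_
        exact prod_nonneg fun k hk => by linarith [ha k (mem_sdiff.1 hk).1]
    _ = exp (-(#t * c)) * ((∏ k ∈ s \ t, (a k + x)) * ∏ k ∈ t, (a k + x)) := by
        rw [prod_mul_distrib, prod_const, ← exp_nat_mul, mul_neg]; ring

lemma pow_succ_mul_le_of_dist_le {ξ x : ℝ} {j k D : ℕ} (hξ0 : 0 ≤ ξ) (hξ1 : ξ ≤ 1)
    (hlo : ξ ^ (j + 1) < x) (hhi : x ≤ ξ ^ j) (hkj : k ≤ j + D) (hjk : j ≤ k + D) :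
    ξ ^ (D + 1) * x ≤ ξ ^ k ∧ ξ ^ (D + 1) * ξ ^ k ≤ x := by
  constructor
  · calc ξ ^ (D + 1) * x ≤ ξ ^ (D + 1) * ξ ^ j := by gcongr
      _ = ξ ^ (D + 1 + j) := (pow_add _ _ _).symm
      _ ≤ ξ ^ k := pow_le_pow_of_le_one hξ0 hξ1 (by omega)
  · calc ξ ^ (D + 1) * ξ ^ k = ξ ^ (D + 1 + k) := (pow_add _ _ _).symm
      _ ≤ ξ ^ (j + 1) := pow_le_pow_of_le_one hξ0 hξ1 (by omega)
      _ ≤ x := hlo.le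

lemma exp_neg_two_mul_le_floor_add_one_mul_pow {s : ℝ} (hs : 1 ≤ s) :
    exp (-2) * s ≤ (⌊s⌋₊ + 1) * exp (-1 / s) ^ (⌊s⌋₊ + 1) := by
  have hfl : s < ⌊s⌋₊ + 1 := Nat.lt_floor_add_one s
  have hfl' : (⌊s⌋₊ : ℝ) ≤ s := Nat.floor_le (by linarith)
  have hpow : exp (-2) ≤ exp (-1 / s) ^ (⌊s⌋₊ + 1) := by
    rw [← exp_nat_mul, exp_le_exp]
    push_cast
    rw [mul_div_assoc', le_div_iff₀ (by linarith)]
    linarith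
  calc exp (-2) * s ≤ exp (-1 / s) ^ (⌊s⌋₊ + 1) * (⌊s⌋₊ + 1) := by
        gcongr
    _ = _ := mul_comm _ _

lemma exp_neg_div_sqrt_pow_le {m : ℕ} (hm : exp 2 ≤ √m) :
    exp (-1 / √m) ^ (m - 1) ≤ exp (-(exp (-2) * √m)) := by
  have hs3 : 3 ≤ √m := by linarith [add_one_le_exp 2]
  have hsm : √m * √m = m := mul_self_sqrt (Nat.cast_nonneg m)
  have hm1 : 1 ≤ m := by exact_mod_cast (show (1 : ℝ) ≤ m by nlinarith)
  have hexp : exp (-2) * 3 ≤ 1 := by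
    rw [exp_neg, inv_mul_le_iff₀ (exp_pos 2)]; linarith [add_one_le_exp 2]
  rw [← exp_nat_mul, exp_le_exp, Nat.cast_sub hm1, Nat.cast_one, mul_div_assoc',
    div_le_iff₀ (by linarith)]
  nlinarith [exp_pos (-2)]

lemma exp_neg_exp_neg_two_mul_sqrt_le_half {m : ℕ} (hm : exp 2 ≤ √m) :
    exp (-(exp (-2) * √m)) ≤ 1 / 2 := by
  have h1 : 1 ≤ exp (-2) * √m := by
    rw [exp_neg, inv_mul_eq_div, le_div_iff₀ (exp_pos 2), one_mul]; exact hm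
  calc exp (-(exp (-2) * √m)) ≤ exp (-1) := exp_le_exp.2 (by linarith)
    _ ≤ 1 / 2 := by
      rw [exp_neg, one_div]
      exact inv_anti₀ (by norm_num) (by linarith [add_one_le_exp 1])

lemma sqrt_add_one_le_sqrt_add_one (x : ℝ) (hx : 0 ≤ x) : √(x + 1) ≤ √x + 1 :=
  sqrt_le_iff.2 ⟨by positivity, by nlinarith [sq_sqrt hx, sqrt_nonneg x]⟩

lemma abs_sub_mul_sub_div_add_le {P N y ε : ℝ} (hP : 0 < P) (hN : -(P / 2) ≤ N) (hy : 0 ≤ y)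
    (h : y * |N| ≤ ε * P) : |y - y * (P - N) / (P + N)| ≤ 4 * ε := by
  have hPN : 0 < P + N := by linarith
  rw [show y - y * (P - N) / (P + N) = 2 * (y * N) / (P + N) by field_simp; ring, abs_div,
    abs_of_pos hPN, abs_mul, abs_mul, abs_of_nonneg hy, abs_two, div_le_iff₀ hPN]
  have hε : 0 ≤ ε := nonneg_of_mul_nonneg_left ((mul_nonneg hy (abs_nonneg N)).trans h) hP
  nlinarith

section Symmetrization

variable {R : Type*} [CommRing R]

lemma natDegree_comp_neg_X_le (P : R[X]) : (P.comp (-X)).natDegree ≤ P.natDegree :=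
  natDegree_comp_le.trans
    (by simpa using Nat.mul_le_mul_left P.natDegree (natDegree_X_le (R := R)))

lemma natDegree_X_mul_sub_comp_neg_X_le (P : R[X]) :
    (X * (P - P.comp (-X))).natDegree ≤ P.natDegree + 1 := by
  have hX : (X : R[X]).natDegree ≤ 1 := natDegree_X_le
  have hsub : (P - P.comp (-X)).natDegree ≤ P.natDegree :=
    (natDegree_sub_le _ _).trans (max_le le_rfl (natDegree_comp_neg_X_le P))
  have := natDegree_mul_le (p := (X : R[X])) (q := P - P.comp (-X))
  omega

lemma natDegree_add_comp_neg_X_le (P : R[X]) : (P + P.comp (-X)).natDegree ≤ P.natDegree :=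
  (natDegree_add_le _ _).trans (max_le le_rfl (natDegree_comp_neg_X_le P))

variable [LinearOrder R] [IsStrictOrderedRing R]

lemma eval_X_mul_sub_comp_neg_X (P : R[X]) (x : R) :
    (X * (P - P.comp (-X))).eval x = |x| * (P.eval |x| - P.eval (-|x|)) := by
  rcases abs_cases x with ⟨hx, _⟩ | ⟨hx, _⟩ <;>
    simp only [eval_mul, eval_X, eval_sub, eval_comp, eval_neg, hx, neg_neg]
  ring

lemma eval_add_comp_neg_X (P : R[X]) (x : R) :
    (P + P.comp (-X)).eval x = P.eval |x| + P.eval (-|x|) := by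
  rcases abs_cases x with ⟨hx, _⟩ | ⟨hx, _⟩ <;>
    simp only [eval_add, eval_comp, eval_neg, eval_X, hx, neg_neg]
  ring

end Symmetrization

noncomputable def newmanPoly (ξ : ℝ) (m : ℕ) : ℝ[X] := ∏ k ∈ range m, (X + C (ξ ^ k))

lemma eval_newmanPoly (ξ x : ℝ) (m : ℕ) :
    (newmanPoly ξ m).eval x = ∏ k ∈ range m, (x + ξ ^ k) := by
  simp [newmanPoly, eval_prod]

lemma natDegree_newmanPoly_le (ξ : ℝ) (m : ℕ) : (newmanPoly ξ m).natDegree ≤ m :=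
  (natDegree_prod_le _ _).trans
    (by simp only [natDegree_X_add_C, sum_const, card_range, smul_eq_mul, mul_one, le_refl])

lemma eval_newmanPoly_pos {ξ x : ℝ} (hξ : 0 < ξ) (hx : 0 ≤ x) (m : ℕ) :
    0 < (newmanPoly ξ m).eval x := by
  rw [eval_newmanPoly]
  exact prod_pos fun k _ => by positivity

lemma eval_newmanPoly_neg_nonneg {ξ x : ℝ} (hξ0 : 0 ≤ ξ) (hξ1 : ξ ≤ 1) {m : ℕ}
    (hx : x ≤ ξ ^ (m - 1)) : 0 ≤ (newmanPoly ξ m).eval (-x) := by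
  rw [eval_newmanPoly]
  refine prod_nonneg fun k hk => ?_
  have : ξ ^ (m - 1) ≤ ξ ^ k := pow_le_pow_of_le_one hξ0 hξ1 (by rw [mem_range] at hk; omega)
  linarith

lemma abs_eval_newmanPoly_neg_le {ξ x : ℝ} (hξ : 0 < ξ) (hx : 0 ≤ x) (m : ℕ) :
    |(newmanPoly ξ m).eval (-x)| ≤ (newmanPoly ξ m).eval x := by
  simp_rw [eval_newmanPoly, neg_add_eq_sub, add_comm x]
  simpa using abs_prod_sub_le_exp_mul_prod_add (empty_subset (range m)) (a := fun k => ξ ^ k)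
    (c := 0) (fun k _ => pow_pos hξ k) hx (by simp) (by simp)

lemma abs_eval_newmanPoly_neg_le_exp {m : ℕ} (hm : exp 2 ≤ √m) {x : ℝ}
    (hx0 : exp (-1 / √m) ^ (m - 1) < x) (hx1 : x ≤ 1) :
    |(newmanPoly (exp (-1 / √m)) m).eval (-x)| ≤
      exp (-(exp (-2) * √m)) * (newmanPoly (exp (-1 / √m)) m).eval x := by
  rw [eval_newmanPoly, eval_newmanPoly]
  set s := √m
  set ξ := exp (-1 / s)
  have hs3 : 3 ≤ s := by linarith [add_one_le_exp 2]
  have hξ0 : 0 < ξ := exp_pos _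
  have hξ1 : ξ < 1 := exp_lt_one_iff.2 (div_neg_of_neg_of_pos (by norm_num) (by linarith))
  have hx : 0 < x := (pow_pos hξ0 _).trans hx0
  obtain ⟨j, hjlo, hjhi⟩ := exists_nat_pow_near_of_lt_one hx hx1 hξ0 hξ1
  have hjm : j < m - 1 := (pow_lt_pow_iff_right_of_lt_one₀ hξ0 hξ1).1 (hx0.trans_le hjhi)
  set D := ⌊s⌋₊
  have hDm : D < m := by
    have hsm : s * s = m := mul_self_sqrt (Nat.cast_nonneg m)
    have : (D : ℝ) < m := by nlinarith [Nat.floor_le (show 0 ≤ s by linarith)]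
    exact_mod_cast this
  -- `j - D` truncates at `0`, so the window has `D + 1` indices, all in `range m` and
  -- within `D` of `j`.
  set t := Icc (j - D) (j - D + D)
  have ht : t ⊆ range m := fun k hk => mem_range.2 (by rw [mem_Icc] at hk; omega)
  have hnear (k : ℕ) (hk : k ∈ t) : ξ ^ (D + 1) * x ≤ ξ ^ k ∧ ξ ^ (D + 1) * ξ ^ k ≤ x := by
    rw [mem_Icc] at hk
    exact pow_succ_mul_le_of_dist_le hξ0.le hξ1.le hjlo hjhi (by omega) (by omega)
  have hwin := abs_prod_sub_le_exp_mul_prod_add ht (a := fun k => ξ ^ k)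
    (fun k _ => pow_pos hξ0 k) hx.le (fun k hk => (hnear k hk).1) (fun k hk => (hnear k hk).2)
  rw [Nat.card_Icc, show j - D + D + 1 - (j - D) = D + 1 by omega] at hwin
  simp_rw [neg_add_eq_sub, add_comm x]
  refine hwin.trans ?_
  refine mul_le_mul_of_nonneg_right (exp_le_exp.2 (neg_le_neg ?_))
    (prod_nonneg fun k _ => by positivity)
  push_cast
  exact exp_neg_two_mul_le_floor_add_one_mul_pow (s := s) (by linarith)

lemma neg_half_le_eval_neg_and_mul_abs_le {m : ℕ} (hm : exp 2 ≤ √m) {y : ℝ} (hy0 : 0 ≤ y)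
    (hy1 : y ≤ 1) :
    -((newmanPoly (exp (-1 / √m)) m).eval y / 2) ≤ (newmanPoly (exp (-1 / √m)) m).eval (-y) ∧
      y * |(newmanPoly (exp (-1 / √m)) m).eval (-y)| ≤
        exp (-(exp (-2) * √m)) * (newmanPoly (exp (-1 / √m)) m).eval y := by
  set ξ := exp (-1 / √m)
  set ε := exp (-(exp (-2) * √m))
  have hξ0 : 0 < ξ := exp_pos _
  have hξ1 : ξ ≤ 1 :=
    exp_le_one_iff.2 (div_nonpos_of_nonpos_of_nonneg (by norm_num) (sqrt_nonneg _))
  have hP : 0 < (newmanPoly ξ m).eval y := eval_newmanPoly_pos hξ0 hy0 m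
  rcases le_or_gt y (ξ ^ (m - 1)) with hsmall | hlarge
  · have hN : 0 ≤ (newmanPoly ξ m).eval (-y) := eval_newmanPoly_neg_nonneg hξ0.le hξ1 hsmall
    refine ⟨by linarith, ?_⟩
    calc y * |(newmanPoly ξ m).eval (-y)| ≤ ξ ^ (m - 1) * (newmanPoly ξ m).eval y :=
          mul_le_mul hsmall (abs_eval_newmanPoly_neg_le hξ0 hy0 m) (abs_nonneg _) (by positivity)
      _ ≤ ε * (newmanPoly ξ m).eval y := by gcongr; exact exp_neg_div_sqrt_pow_le hm
  · have hN := abs_eval_newmanPoly_neg_le_exp hm hlarge hy1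
    have hε := exp_neg_exp_neg_two_mul_sqrt_le_half hm
    refine ⟨?_, ?_⟩
    · nlinarith [neg_abs_le ((newmanPoly ξ m).eval (-y))]
    · nlinarith [abs_nonneg ((newmanPoly ξ m).eval (-y))]

theorem exists_approx_abs_of_exp_two_le_sqrt {m : ℕ} (hm : exp 2 ≤ √m) :
    ∃ p q : ℝ[X], p.natDegree ≤ m + 1 ∧ q.natDegree ≤ m ∧
      (∀ x ∈ Set.Icc (-1 : ℝ) 1, q.eval x ≠ 0) ∧
      ∀ x ∈ Set.Icc (-1 : ℝ) 1, |(|x| - p.eval x / q.eval x)| ≤ 4 * exp (-(exp (-2) * √m)) := by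
  set P := newmanPoly (exp (-1 / √m)) m
  have hdeg : P.natDegree ≤ m := natDegree_newmanPoly_le _ m
  have hbound : ∀ x ∈ Set.Icc (-1 : ℝ) 1, 0 < P.eval |x| ∧ -(P.eval |x| / 2) ≤ P.eval (-|x|) ∧
      |x| * |P.eval (-|x|)| ≤ exp (-(exp (-2) * √m)) * P.eval |x| := fun x hx =>
    ⟨eval_newmanPoly_pos (exp_pos _) (abs_nonneg x) m,
      neg_half_le_eval_neg_and_mul_abs_le hm (abs_nonneg x) (abs_le.2 hx)⟩
  refine ⟨X * (P - P.comp (-X)), P + P.comp (-X),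
    (natDegree_X_mul_sub_comp_neg_X_le P).trans (by omega),
    (natDegree_add_comp_neg_X_le P).trans hdeg, fun x hx => ?_, fun x hx => ?_⟩
  · obtain ⟨hP, hN, -⟩ := hbound x hx
    rw [eval_add_comp_neg_X]
    linarith
  · obtain ⟨hP, hN, hε⟩ := hbound x hx
    rw [eval_X_mul_sub_comp_neg_X, eval_add_comp_neg_X]
    exact abs_sub_mul_sub_div_add_le hP hN (abs_nonneg x) hε

/-- Newman's theorem: there is a constant `C > 0` such that for every `n ≥ 1` there is a rational
function `r_n = p/q` of type `(n, n)` with real coefficients (with `q` zero-free on `[−1,1]`)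
satisfying `sup_{x ∈ [−1,1]} ||x| − r_n(x)| = O(e^{−C√n})`: rational approximation to `|x|` on
`[−1,1]` achieves root-exponential convergence. -/
theorem newman_rational_approximation_abs :
    ∃ C : ℝ, 0 < C ∧ ∃ M : ℝ, ∀ n : ℕ, 1 ≤ n →
      ∃ p q : Polynomial ℝ, p.natDegree ≤ n ∧ q.natDegree ≤ n ∧
        (∀ x ∈ Set.Icc (-1 : ℝ) 1, Polynomial.eval x q ≠ 0) ∧
        ∀ x ∈ Set.Icc (-1 : ℝ) 1,
          |(|x| - Polynomial.eval x p / Polynomial.eval x q)| ≤ M * Real.exp (-C * Real.sqrt n) := by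
  set c := exp (-2)
  refine ⟨c, exp_pos _, max (4 * exp c) (exp (c * (exp 2 + 1))), fun n hn => ?_⟩
  obtain ⟨m, rfl⟩ : ∃ m, n = m + 1 := ⟨n - 1, by omega⟩
  have hsqrt : √((m + 1 : ℕ) : ℝ) ≤ √m + 1 := by
    push_cast; exact sqrt_add_one_le_sqrt_add_one _ (Nat.cast_nonneg m)
  by_cases hm : exp 2 ≤ √m
  · obtain ⟨p, q, hp, hq, hq0, hpq⟩ := exists_approx_abs_of_exp_two_le_sqrt hm
    refine ⟨p, q, hp, hq.trans m.le_succ, hq0, fun x hx => (hpq x hx).trans ?_⟩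
    calc 4 * exp (-(c * √m)) ≤ 4 * exp c * exp (-c * √((m + 1 : ℕ) : ℝ)) := by
          rw [mul_assoc, ← exp_add]; gcongr; nlinarith [exp_pos (-2)]
      _ ≤ _ := by gcongr; exact le_max_left _ _
  · refine ⟨0, 1, by simp, by simp, by simp, fun x hx => ?_⟩
    calc |(|x| - eval x 0 / eval x 1)| = |x| := by simp
      _ ≤ 1 := abs_le.2 hx
      _ ≤ exp (c * (exp 2 + 1)) * exp (-c * √((m + 1 : ℕ) : ℝ)) := by
          rw [← exp_add]; exact one_le_exp (by nlinarith [exp_pos (-2)])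
      _ ≤ _ := by gcongr; exact le_max_right _ _
end

section
/- Linear convergence barrier for polynomial approximation of the absolute value: there exists a constant c > 0 such that for every n ≥ 1 and every polynomial p of degree at most n with real coefficients, sup_{x ∈ [−1,1]} | |x| − p(x) | ≥ c/n; that is, polynomial approximation to f(x) = |x| on [−1,1] achieves at best linear convergence O(1/n). -/
/-!
Duality with an explicit test kernel, in the variable `x = cos θ`, `θ ∈ [0, π]`. For `r ≤ M` put
`K(θ) = -cos (4Mθ) · |∑_{j<r} e^{4ijθ}|²`. It is a cosine polynomial with frequencies in
`[4(M-r+1), 4(M+r-1)]`, so `∫₀^π p(cos θ) K(θ) dθ = 0` whenever `deg p < 4(M-r+1)`, and `|K|` is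
bounded by the Fejér kernel `|∑_{j<r} e^{4ijθ}|²`, whose integral is `πr`. The Fourier coefficient
of `|cos θ|` at every frequency `4a` is `-2/(16a²-1)` (frequencies are multiples of `4` so that
all of these have the same sign), hence `∫₀^π |cos θ| K(θ) dθ ≥ r²/(8(M+r)²)`. If `||x| - p(x)| ≤ ε`
on `[-1, 1]` and `deg p` is small, subtracting `p(cos θ)` does not change that integral, so
`r²/(8(M+r)²) ≤ ∫₀^π (|cos θ| - p(cos θ)) K(θ) dθ ≤ επr`; `M = 2n`, `r = n` give
`ε ≥ 1/(72πn)`.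
-/

open Real Finset Polynomial intervalIntegral

namespace AbsApprox

lemma integral_finset_sum_sum {ι κ : Type*} (s : Finset ι) (t : Finset κ) (f : ι → κ → ℝ → ℝ)
    (hf : ∀ i j, Continuous (f i j)) (a b : ℝ) :
    ∫ x in a..b, ∑ i ∈ s, ∑ j ∈ t, f i j x = ∑ i ∈ s, ∑ j ∈ t, ∫ x in a..b, f i j x := by
  rw [integral_finsetSum fun i _ =>
    (continuous_finsetSum _ fun j _ => hf i j).intervalIntegrable _ _]
  exact sum_congr rfl fun i _ => integral_finsetSum fun j _ => (hf i j).intervalIntegrable _ _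

lemma cos_mul_mul_cos_mul (a b θ : ℝ) :
    cos (a * θ) * cos (b * θ) = (cos ((a + b) * θ) + cos ((a - b) * θ)) / 2 := by
  rw [add_mul, sub_mul, cos_add, cos_sub]
  ring

lemma integral_cos_mul {c : ℝ} (hc : c ≠ 0) (a b : ℝ) :
    ∫ θ in a..b, cos (c * θ) = (sin (c * b) - sin (c * a)) / c := by
  rw [integral_comp_mul_left (fun x => cos x) hc, integral_cos, smul_eq_mul, inv_mul_eq_div]

lemma integral_cos_int_mul (m : ℤ) :
    ∫ θ in (0 : ℝ)..π, cos (m * θ) = if m = 0 then π else 0 := by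
  split_ifs with hm
  · simp [hm]
  · rw [integral_cos_mul (by exact_mod_cast hm)]
    simp [sin_int_mul_pi]

lemma integral_cos_pow_mul_cos_int_mul (k : ℕ) {m : ℤ} (hkm : k < m.natAbs) :
    ∫ θ in (0 : ℝ)..π, cos θ ^ k * cos (m * θ) = 0 := by
  induction k generalizing m with
  | zero =>
    simp only [pow_zero, one_mul]
    rw [integral_cos_int_mul, if_neg (by omega)]
  | succ k ih =>
    have product_to_sum : ∀ θ : ℝ, cos θ ^ (k + 1) * cos (m * θ) =
        (cos θ ^ k * cos ((m + 1 : ℤ) * θ) + cos θ ^ k * cos ((m - 1 : ℤ) * θ)) / 2 := by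
      intro θ
      have h := cos_mul_mul_cos_mul m 1 θ
      push_cast
      rw [one_mul] at h
      linear_combination (cos θ ^ k) * h
    simp_rw [product_to_sum]
    rw [integral_div, integral_add (Continuous.intervalIntegrable (by fun_prop) _ _)
      (Continuous.intervalIntegrable (by fun_prop) _ _), ih (by omega), ih (by omega)]
    simp

lemma integral_eval_cos_mul_cos_int_mul (p : ℝ[X]) {m : ℤ} (hpm : p.natDegree < m.natAbs) :
    ∫ θ in (0 : ℝ)..π, p.eval (cos θ) * cos (m * θ) = 0 := by
  simp_rw [eval_eq_sum_range, sum_mul, mul_assoc]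
  rw [integral_finsetSum fun i _ => Continuous.intervalIntegrable (by fun_prop) _ _]
  refine sum_eq_zero fun i hi => ?_
  rw [integral_const_mul, integral_cos_pow_mul_cos_int_mul i (by grind), mul_zero]

lemma integral_cos_mul_cos_two_int_mul (g : ℤ) (b : ℝ) :
    ∫ θ in (0 : ℝ)..b, cos θ * cos (2 * g * θ) =
      (sin ((2 * g + 1) * b) / (2 * g + 1) + sin ((2 * g - 1) * b) / (2 * g - 1)) / 2 := by
  have hplus : (2 * g + 1 : ℝ) ≠ 0 := by exact_mod_cast (by omega : 2 * g + 1 ≠ 0)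
  have hminus : (2 * g - 1 : ℝ) ≠ 0 := by exact_mod_cast (by omega : 2 * g - 1 ≠ 0)
  have product_to_sum : ∀ θ : ℝ, cos θ * cos (2 * g * θ) =
      (cos ((2 * g + 1) * θ) + cos ((2 * g - 1) * θ)) / 2 := by
    intro θ
    have h := cos_mul_mul_cos_mul (2 * g) 1 θ
    rw [one_mul] at h
    linear_combination h
  simp_rw [product_to_sum]
  rw [integral_div, integral_add (Continuous.intervalIntegrable (by fun_prop) _ _)
    (Continuous.intervalIntegrable (by fun_prop) _ _), integral_cos_mul hplus,
    integral_cos_mul hminus]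
  simp only [mul_zero, sin_zero, sub_zero]

lemma integral_abs_cos_mul_cos_two_int_mul (g : ℤ) :
    ∫ θ in (0 : ℝ)..π, |cos θ| * cos (2 * g * θ) = -2 * cos (g * π) / (4 * g ^ 2 - 1) := by
  have hplus : (2 * g + 1 : ℝ) ≠ 0 := by exact_mod_cast (by omega : 2 * g + 1 ≠ 0)
  have hminus : (2 * g - 1 : ℝ) ≠ 0 := by exact_mod_cast (by omega : 2 * g - 1 ≠ 0)
  have half : ∫ θ in (0 : ℝ)..π / 2, cos θ * cos (2 * g * θ) =
      (cos (g * π) / (2 * g + 1) - cos (g * π) / (2 * g - 1)) / 2 := by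
    rw [integral_cos_mul_cos_two_int_mul, show (2 * g + 1) * (π / 2) = g * π + π / 2 by ring,
      show (2 * g - 1) * (π / 2) = g * π - π / 2 by ring, sin_add_pi_div_two,
      sin_sub_pi_div_two]
    ring
  have full : ∫ θ in (0 : ℝ)..π, cos θ * cos (2 * g * θ) = 0 := by
    have h1 := sin_int_mul_pi (2 * g + 1)
    have h2 := sin_int_mul_pi (2 * g - 1)
    push_cast at h1 h2
    simp [integral_cos_mul_cos_two_int_mul, h1, h2]
  have left : ∫ θ in (0 : ℝ)..π / 2, |cos θ| * cos (2 * g * θ) =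
      ∫ θ in (0 : ℝ)..π / 2, cos θ * cos (2 * g * θ) := by
    refine integral_congr fun θ hθ => ?_
    rw [Set.uIcc_of_le (by positivity)] at hθ
    rw [abs_of_nonneg (cos_nonneg_of_mem_Icc ⟨by linarith [hθ.1, pi_pos], hθ.2⟩)]
  have right : ∫ θ in π / 2..π, |cos θ| * cos (2 * g * θ) =
      -∫ θ in π / 2..π, cos θ * cos (2 * g * θ) := by
    rw [← integral_neg]
    refine integral_congr fun θ hθ => ?_
    rw [Set.uIcc_of_le (by linarith [pi_pos])] at hθ
    rw [abs_of_nonpos (cos_nonpos_of_pi_div_two_le_of_le hθ.1 (by linarith [hθ.2, pi_pos])),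
      neg_mul]
  rw [← integral_add_adjacent_intervals (b := π / 2)
    (Continuous.intervalIntegrable (by fun_prop) _ _)
    (Continuous.intervalIntegrable (by fun_prop) _ _), left, right,
    ← integral_interval_sub_left (a := 0) (b := π) (Continuous.intervalIntegrable (by fun_prop) _ _)
    (Continuous.intervalIntegrable (by fun_prop) _ _), full, half,
    show (4 * g ^ 2 - 1 : ℝ) = (2 * g + 1) * (2 * g - 1) by ring, div_sub_div _ _ hplus hminus]
  ring

lemma integral_abs_cos_mul_cos_four_int_mul (a : ℤ) :
    ∫ θ in (0 : ℝ)..π, |cos θ| * cos ((4 * a : ℤ) * θ) = -2 / (16 * a ^ 2 - 1) := by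
  have h := integral_abs_cos_mul_cos_two_int_mul (2 * a)
  push_cast at h ⊢
  rw [show ((2 : ℝ) * a) * π = a * (2 * π) by ring, cos_int_mul_two_pi] at h
  simp only [← mul_assoc, show (2 : ℝ) * 2 = 4 by norm_num] at h
  rw [h]
  ring

noncomputable def fejerKernel (r : ℕ) (θ : ℝ) : ℝ :=
  (∑ j ∈ range r, cos (4 * j * θ)) ^ 2 + (∑ j ∈ range r, sin (4 * j * θ)) ^ 2

lemma fejerKernel_nonneg (r : ℕ) (θ : ℝ) : 0 ≤ fejerKernel r θ := by
  unfold fejerKernel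
  positivity

@[fun_prop]
lemma continuous_fejerKernel (r : ℕ) : Continuous (fejerKernel r) := by
  unfold fejerKernel
  fun_prop

lemma fejerKernel_eq_sum (r : ℕ) (θ : ℝ) :
    fejerKernel r θ = ∑ j ∈ range r, ∑ i ∈ range r, cos ((4 * ((j : ℤ) - i) : ℤ) * θ) := by
  rw [fejerKernel, sq, sq, sum_mul_sum, sum_mul_sum, ← sum_add_distrib]
  refine sum_congr rfl fun j _ => ?_
  rw [← sum_add_distrib]
  refine sum_congr rfl fun i _ => ?_
  push_cast
  rw [show 4 * ((j : ℝ) - i) * θ = 4 * j * θ - 4 * i * θ by ring, cos_sub]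

lemma integral_fejerKernel (r : ℕ) : ∫ θ in (0 : ℝ)..π, fejerKernel r θ = π * r := by
  simp_rw [fejerKernel_eq_sum]
  rw [integral_finset_sum_sum _ _ _ fun j i => by fun_prop]
  simp_rw [integral_cos_int_mul]
  simp +contextual [sub_eq_zero, mul_comm]

noncomputable def modulatedFejerKernel (M r : ℕ) (θ : ℝ) : ℝ :=
  -cos (4 * M * θ) * fejerKernel r θ

@[fun_prop]
lemma continuous_modulatedFejerKernel (M r : ℕ) : Continuous (modulatedFejerKernel M r) := by
  unfold modulatedFejerKernel
  fun_prop

lemma abs_modulatedFejerKernel_le (M r : ℕ) (θ : ℝ) :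
    |modulatedFejerKernel M r θ| ≤ fejerKernel r θ := by
  rw [modulatedFejerKernel, abs_mul, abs_neg, abs_of_nonneg (fejerKernel_nonneg r θ)]
  exact mul_le_of_le_one_left (fejerKernel_nonneg r θ) (abs_cos_le_one _)

lemma modulatedFejerKernel_eq_sum (M r : ℕ) (θ : ℝ) :
    modulatedFejerKernel M r θ = -∑ j ∈ range r, ∑ i ∈ range r,
      (cos ((4 * ((M : ℤ) + j - i) : ℤ) * θ) + cos ((4 * ((M : ℤ) - j + i) : ℤ) * θ)) / 2 := by
  simp_rw [modulatedFejerKernel, fejerKernel_eq_sum, neg_mul, mul_sum]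
  congr 1
  refine sum_congr rfl fun j _ => sum_congr rfl fun i _ => ?_
  have h := cos_mul_mul_cos_mul (4 * M) (4 * (j - i)) θ
  push_cast at h ⊢
  ring_nf at h ⊢
  exact h

lemma integral_eval_cos_mul_modulatedFejerKernel (p : ℝ[X]) {M r : ℕ}
    (hdeg : p.natDegree + 4 * r < 4 * (M + 1)) :
    ∫ θ in (0 : ℝ)..π, p.eval (cos θ) * modulatedFejerKernel M r θ = 0 := by
  simp_rw [modulatedFejerKernel_eq_sum, mul_neg, mul_sum, mul_div_assoc', mul_add (p.eval _)]
  rw [integral_neg, integral_finset_sum_sum _ _ _ fun j i => by fun_prop, neg_eq_zero]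
  refine sum_eq_zero fun j hj => sum_eq_zero fun i hi => ?_
  rw [mem_range] at hi hj
  rw [integral_div, integral_add (Continuous.intervalIntegrable (by fun_prop) _ _)
    (Continuous.intervalIntegrable (by fun_prop) _ _),
    integral_eval_cos_mul_cos_int_mul p (by omega), integral_eval_cos_mul_cos_int_mul p (by omega),
    add_zero, zero_div]

lemma integral_abs_cos_mul_modulatedFejerKernel (M r : ℕ) :
    ∫ θ in (0 : ℝ)..π, |cos θ| * modulatedFejerKernel M r θ =
      ∑ j ∈ range r, ∑ i ∈ range r,
        (1 / (16 * ((M : ℝ) + j - i) ^ 2 - 1) + 1 / (16 * ((M : ℝ) - j + i) ^ 2 - 1)) := by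
  simp_rw [modulatedFejerKernel_eq_sum, mul_neg, mul_sum, mul_div_assoc', mul_add |cos _|]
  rw [integral_neg, integral_finset_sum_sum _ _ _ fun j i => by fun_prop, ← sum_neg_distrib]
  refine sum_congr rfl fun j _ => ?_
  rw [← sum_neg_distrib]
  refine sum_congr rfl fun i _ => ?_
  rw [integral_div, integral_add (Continuous.intervalIntegrable (by fun_prop) _ _)
    (Continuous.intervalIntegrable (by fun_prop) _ _), integral_abs_cos_mul_cos_four_int_mul,
    integral_abs_cos_mul_cos_four_int_mul]
  push_cast
  ring

lemma le_integral_abs_cos_mul_modulatedFejerKernel {M r : ℕ} (hrM : r ≤ M) :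
    (r : ℝ) ^ 2 / (8 * (M + r) ^ 2) ≤
      ∫ θ in (0 : ℝ)..π, |cos θ| * modulatedFejerKernel M r θ := by
  have frequency_bound : ∀ a : ℝ, 1 ≤ a → a ≤ M + r →
      1 / (16 * ((M : ℝ) + r) ^ 2) ≤ 1 / (16 * a ^ 2 - 1) := fun a h1 h2 =>
    one_div_le_one_div_of_le (by nlinarith) (by nlinarith)
  have hrM' : (r : ℝ) ≤ M := by exact_mod_cast hrM
  rw [integral_abs_cos_mul_modulatedFejerKernel]
  calc (r : ℝ) ^ 2 / (8 * (M + r) ^ 2)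
      = ∑ j ∈ range r, ∑ i ∈ range r,
          (1 / (16 * ((M : ℝ) + r) ^ 2) + 1 / (16 * ((M : ℝ) + r) ^ 2)) := by
        simp only [sum_const, card_range, nsmul_eq_mul]
        generalize (M : ℝ) + r = X
        ring
    _ ≤ _ := by
        refine sum_le_sum fun j hj => sum_le_sum fun i hi => ?_
        have hj' : (j : ℝ) + 1 ≤ r := by exact_mod_cast mem_range.mp hj
        have hi' : (i : ℝ) + 1 ≤ r := by exact_mod_cast mem_range.mp hi
        exact add_le_add (frequency_bound _ (by linarith) (by linarith))
          (frequency_bound _ (by linarith) (by linarith))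

lemma integral_abs_cos_mul_modulatedFejerKernel_le (p : ℝ[X]) {M r : ℕ}
    (hdeg : p.natDegree + 4 * r < 4 * (M + 1)) {ε : ℝ}
    (hε : ∀ x ∈ Set.Icc (-1 : ℝ) 1, |(|x| - p.eval x)| ≤ ε) :
    ∫ θ in (0 : ℝ)..π, |cos θ| * modulatedFejerKernel M r θ ≤ ε * (π * r) := by
  have hcos : ∀ θ, cos θ ∈ Set.Icc (-1 : ℝ) 1 := fun θ => ⟨neg_one_le_cos θ, cos_le_one θ⟩
  calc ∫ θ in (0 : ℝ)..π, |cos θ| * modulatedFejerKernel M r θ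
      = ∫ θ in (0 : ℝ)..π, (|cos θ| - p.eval (cos θ)) * modulatedFejerKernel M r θ := by
        simp_rw [sub_mul]
        rw [integral_sub (Continuous.intervalIntegrable (by fun_prop) _ _)
          (Continuous.intervalIntegrable (by fun_prop) _ _),
          integral_eval_cos_mul_modulatedFejerKernel p hdeg, sub_zero]
    _ ≤ ∫ θ in (0 : ℝ)..π, ε * fejerKernel r θ := by
        refine integral_mono_on pi_pos.le (Continuous.intervalIntegrable (by fun_prop) _ _)
          (Continuous.intervalIntegrable (by fun_prop) _ _) fun θ _ => ?_
        refine (le_abs_self _).trans ?_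
        rw [abs_mul]
        exact mul_le_mul (hε _ (hcos θ)) (abs_modulatedFejerKernel_le M r θ) (abs_nonneg _)
          ((abs_nonneg _).trans (hε _ (hcos θ)))
    _ = ε * (π * r) := by rw [integral_const_mul, integral_fejerKernel]

end AbsApprox

/-- Linear convergence barrier for polynomial approximation of the absolute value: there is a
constant `c > 0` such that for every `n ≥ 1` and every real polynomial `p` of degree at most `n`,
`sup_{x ∈ [−1,1]} ||x| − p(x)| ≥ c/n`; polynomial approximation to `|x|` on `[−1,1]` achieves at
best linear convergence. -/
theorem polynomial_approximation_abs_lower_bound :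
    ∃ c : ℝ, 0 < c ∧ ∀ n : ℕ, 1 ≤ n → ∀ p : Polynomial ℝ, p.natDegree ≤ n →
      ∃ x ∈ Set.Icc (-1 : ℝ) 1, c / n ≤ |(|x| - Polynomial.eval x p)| := by
  refine ⟨1 / 288, by norm_num, fun n hn p hp => ?_⟩
  by_contra! hsmall
  have hn' : (0 : ℝ) < n := by exact_mod_cast hn
  have lower :=
    AbsApprox.le_integral_abs_cos_mul_modulatedFejerKernel (M := 2 * n) (r := n) (by omega)
  have upper := AbsApprox.integral_abs_cos_mul_modulatedFejerKernel_le p (M := 2 * n) (r := n)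
    (by omega) fun x hx => (hsmall x hx).le
  rw [Nat.cast_mul, Nat.cast_two,
    show (n : ℝ) ^ 2 / (8 * (2 * n + n) ^ 2) = 1 / 72 by field_simp; ring] at lower
  rw [show 1 / 288 / (n : ℝ) * (π * n) = π / 288 by field_simp] at upper
  linarith [pi_lt_four]
end
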